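/- arXiv:1909.13604 — 3 statements merged into one kernel-verified Lean document; each statement's English description precedes it below -/
import Mathlib

section
/- For any interface automaton s, the set of s-output-existential words equals traces(s)·I*, i.e., OE(s) = traces(s)·I*. -/
/-- An interface automaton over inputs `In`, outputs `Out`, states `State`. -/
structure IA (In Out State : Type) where
  init : State
  tr : State → (In ⊕ Out) → State → Prop

namespace IA

variable {In Out State State1 State2 State3 : Type}

/-- One-step successor sets. -/
def step (s : IA In Out State) (P : Set State) (ℓ : In ⊕ Out) : Set State :=
  {q' | ∃ q ∈ P, s.tr q ℓ q'}

/-- `s after σ`: states reachable from the initial state via word `σ`. -/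
def after (s : IA In Out State) (σ : List (In ⊕ Out)) : Set State :=
  σ.foldl s.step {s.init}

/-- Traces of `s`. -/
def traces (s : IA In Out State) : Set (List (In ⊕ Out)) :=
  {σ | (s.after σ).Nonempty}

/-- Inputs enabled in *all* states of `P`. -/
def inSet (s : IA In Out State) (P : Set State) : Set In :=
  {a | ∀ q ∈ P, ∃ q', s.tr q (Sum.inl a) q'}

/-- Outputs enabled in *some* state of `P`. -/
def outSet (s : IA In Out State) (P : Set State) : Set Out :=
  {x | ∃ q ∈ P, ∃ q', s.tr q (Sum.inr x) q'}

end IA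

/-- Input-failure traces: a word over `L = In ⊕ Out` possibly followed by a
    final input-failure symbol `ā` (encoded as `some a`). -/
abbrev FTrace (In Out : Type) := List (In ⊕ Out) × Option In

/-- A set of input-failure traces is input-failure closed. -/
def fclosed {In Out : Type} (S : Set (FTrace In Out)) : Prop :=
  ∀ (σ : List (In ⊕ Out)) (a : In) (ρ : FTrace In Out),
    (σ, some a) ∈ S → (σ ++ Sum.inl a :: ρ.1, ρ.2) ∈ S

/-- Input-failure closure. -/
def fcl {In Out : Type} (S : Set (FTrace In Out)) : Set (FTrace In Out) :=
  S ∪ {t | ∃ (σ : List (In ⊕ Out)) (a : In) (ρ : FTrace In Out),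
        (σ, some a) ∈ S ∧ t = (σ ++ Sum.inl a :: ρ.1, ρ.2)}

namespace IA

variable {In Out State State1 State2 State3 : Type}

/-- Input-failure traces of an IA. -/
def Ftraces (s : IA In Out State) : Set (FTrace In Out) :=
  {t | (t.2 = none ∧ t.1 ∈ s.traces) ∨
       (∃ a, t.2 = some a ∧ a ∉ s.inSet (s.after t.1))}

/-- Input-failure refinement. -/
def refIF (s1 : IA In Out State1) (s2 : IA In Out State2) : Prop :=
  s1.Ftraces ⊆ fcl s2.Ftraces

/-- Output-existential words of `s`. -/
def OE (s : IA In Out State) : Set (List (In ⊕ Out)) :=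
  {σ | ∀ ρ x τ, σ = ρ ++ Sum.inr x :: τ → x ∈ s.outSet (s.after ρ)}

/-- Input-universal words of `s`. -/
def IU (s : IA In Out State) : Set (List (In ⊕ Out)) :=
  {σ | ∀ ρ a τ, σ = ρ ++ Sum.inl a :: τ → a ∈ s.inSet (s.after ρ)}

/-- Input-universal / output-existential refinement. -/
def refIUOE (s1 : IA In Out State1) (s2 : IA In Out State2) : Prop :=
  s1.OE ∩ s2.IU ⊆ s1.IU ∩ s2.OE

/-- Utraces: traces where every occurring input is enabled in all states
    reached by the preceding prefix. -/
def Utraces (s : IA In Out State) : Set (List (In ⊕ Out)) :=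
  {σ | σ ∈ s.traces ∧
       ∀ ρ a, (ρ ++ [Sum.inl a]) <+: σ → a ∈ s.inSet (s.after ρ)}

/-- `Δ`: add a `δ`-selfloop (a fresh output) to each quiescent state. -/
def delta (s : IA In Out State) : IA In (Out ⊕ Unit) State where
  init := s.init
  tr := fun q ℓ q' =>
    match ℓ with
    | Sum.inl a => s.tr q (Sum.inl a) q'
    | Sum.inr (Sum.inl x) => s.tr q (Sum.inr x) q'
    | Sum.inr (Sum.inr _) => q' = q ∧ ∀ x q'', ¬ s.tr q (Sum.inr x) q''

/-- `i uioco s`. -/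
def uioco (i : IA In Out State1) (s : IA In Out State2) : Prop :=
  ∀ σ ∈ (delta s).Utraces,
    (delta i).outSet ((delta i).after σ) ⊆ (delta s).outSet ((delta s).after σ) ∧
    (delta s).inSet ((delta s).after σ) ⊆ (delta i).inSet ((delta i).after σ)

/-! ### Game framework -/

/-- A (finite) path: a list of (label, target-state) steps from the initial state. -/
abbrev Path (In Out State : Type) := List ((In ⊕ Out) × State)

/-- The state reached just before step `n` of `π` (the initial state for `n = 0`). -/
def stateAt (s : IA In Out State) (π : Path In Out State) : ℕ → State
  | 0 => s.init
  | Nat.succ m => (π[m]?.map Prod.snd).getD s.init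

/-- The final state of a path. -/
def lastState (s : IA In Out State) (π : Path In Out State) : State :=
  stateAt s π π.length

/-- Validity of a path. -/
def IsPath (s : IA In Out State) (π : Path In Out State) : Prop :=
  ∀ n p, π[n]? = some p → s.tr (stateAt s π n) p.1 p.2

/-- Output strategies. -/
structure OutStrat (s : IA In Out State) where
  f : Path In Out State → Option Out
  valid : ∀ π x, IsPath s π → f π = some x →
    ∃ q', s.tr (lastState s π) (Sum.inr x) q'

/-- Input strategies. -/
structure InStrat (s : IA In Out State) where
  f : Path In Out State → Option In
  valid : ∀ π a, IsPath s π → f π = some a →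
    ∃ q', s.tr (lastState s π) (Sum.inl a) q'

/-- Determinization strategies. -/
structure DetStrat (s : IA In Out State) where
  f : Path In Out State → (In ⊕ Out) → Option State
  total : ∀ π ℓ, IsPath s π → (∃ q', s.tr (lastState s π) ℓ q') → (f π ℓ).isSome
  valid : ∀ π ℓ q', IsPath s π → f π ℓ = some q' → s.tr (lastState s π) ℓ q'

/-- Race-condition strategies: `false` = prefer input, `true` = prefer output. -/
abbrev RaceStrat (In Out State : Type) := Path In Out State → Bool

/-- An input strategy is trace-based if it depends only on the trace of the path. -/
def TraceBased (s : IA In Out State) (fi : InStrat s) : Prop :=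
  ∀ π π', IsPath s π → IsPath s π' →
    π.map Prod.fst = π'.map Prod.fst → fi.f π = fi.f π'

/-- Extend a path by label `ℓ` using the determinization strategy. -/
def push (s : IA In Out State) (fd : DetStrat s) (π : Path In Out State)
    (ℓ : In ⊕ Out) : Path In Out State :=
  match fd.f π ℓ with
  | some q => π ++ [(ℓ, q)]
  | none => π

/-- One step of the strategy-driven execution. -/
def gstep (s : IA In Out State) (fi : InStrat s) (fo : OutStrat s)
    (fd : DetStrat s) (fr : RaceStrat In Out State)
    (π : Path In Out State) : Path In Out State :=
  match fi.f π, fo.f π with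
  | some a, none => push s fd π (Sum.inl a)
  | none, some x => push s fd π (Sum.inr x)
  | some a, some x => if fr π then push s fd π (Sum.inr x) else push s fd π (Sum.inl a)
  | none, none => π

/-- The `n`-th label of the (finite or infinite) outcome of the four strategies. -/
def outcomeTrace (s : IA In Out State) (fi : InStrat s) (fo : OutStrat s)
    (fd : DetStrat s) (fr : RaceStrat In Out State) (n : ℕ) : Option (In ⊕ Out) :=
  (((gstep s fi fo fd fr)^[n + 1] ([] : Path In Out State))[n]?).map Prod.fst

/-- Alternating-trace containment for IA. -/
def refATC (s1 : IA In Out State1) (s2 : IA In Out State2) : Prop :=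
  ∀ (fo1 : OutStrat s1) (fd1 : DetStrat s1) (fr1 : RaceStrat In Out State1),
  ∃ (fo2 : OutStrat s2) (fd2 : DetStrat s2) (fr2 : RaceStrat In Out State2),
  ∀ (fi2 : InStrat s2), ∃ (fi1 : InStrat s1),
    ∀ n, outcomeTrace s1 fi1 fo1 fd1 fr1 n = outcomeTrace s2 fi2 fo2 fd2 fr2 n

/-- The reordered, trace-based game relation `≤_{∀∀∃∃}^{tb}`. -/
def refAAEEtb (s1 : IA In Out State1) (s2 : IA In Out State2) : Prop :=
  ∀ (fi2 : InStrat s2), TraceBased s2 fi2 →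
  ∀ (fo1 : OutStrat s1) (fd1 : DetStrat s1) (fr1 : RaceStrat In Out State1),
  ∃ (fi1 : InStrat s1), TraceBased s1 fi1 ∧
  ∃ (fo2 : OutStrat s2) (fd2 : DetStrat s2) (fr2 : RaceStrat In Out State2),
    ∀ n, outcomeTrace s1 fi1 fo1 fd1 fr1 n = outcomeTrace s2 fi2 fo2 fd2 fr2 n

/-- Alternating simulation. -/
def IsAltSim (s1 : IA In Out State1) (s2 : IA In Out State2)
    (R : State1 → State2 → Prop) : Prop :=
  ∀ q1 q2, R q1 q2 →
    (s1.outSet {q1} ⊆ s2.outSet {q2}) ∧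
    (s2.inSet {q2} ⊆ s1.inSet {q1}) ∧
    (∀ a q1', a ∈ s2.inSet {q2} → s1.tr q1 (Sum.inl a) q1' →
       ∃ q2', s2.tr q2 (Sum.inl a) q2' ∧ R q1' q2') ∧
    (∀ x q1', s1.tr q1 (Sum.inr x) q1' →
       ∃ q2', s2.tr q2 (Sum.inr x) q2' ∧ R q1' q2')

/-- Greatest alternating simulation relates the initial states. -/
def refAS (s1 : IA In Out State1) (s2 : IA In Out State2) : Prop :=
  ∃ R, IsAltSim s1 s2 R ∧ R s1.init s2.init

/-- Image finiteness. -/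
def ImageFinite (s : IA In Out State) : Prop :=
  ∀ q ℓ, {q' | s.tr q ℓ q'}.Finite

/-- Input-universal determinization (subset construction restricted to
    universally enabled inputs and existentially enabled outputs). -/
def detIU (s : IA In Out State) : IA In Out (Set State) where
  init := {s.init}
  tr := fun P ℓ P' => P.Nonempty ∧
    (match ℓ with
     | Sum.inl a => a ∈ s.inSet P
     | Sum.inr x => x ∈ s.outSet P) ∧
    P' = s.step P ℓ

end IA


section Aux
open IA
variable {In Out State : Type}

lemma IA.after_append (s : IA In Out State) (σ τ : List (In ⊕ Out)) :
    s.after (σ ++ τ) = τ.foldl s.step (s.after σ) := by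
  simp [IA.after, List.foldl_append]

lemma IA.step_empty (s : IA In Out State) (ℓ : In ⊕ Out) : s.step ∅ ℓ = ∅ := by
  ext q'; simp [IA.step]

lemma IA.foldl_step_empty (s : IA In Out State) (τ : List (In ⊕ Out)) :
    τ.foldl s.step ∅ = ∅ := by
  induction τ with
  | nil => rfl
  | cons ℓ τ ih => simp [IA.step_empty, ih]

lemma IA.after_prefix_nonempty (s : IA In Out State) {σ τ : List (In ⊕ Out)}
    (h : (s.after (σ ++ τ)).Nonempty) : (s.after σ).Nonempty := by
  by_contra hne
  rw [Set.not_nonempty_iff_eq_empty] at hne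
  rw [IA.after_append, hne, IA.foldl_step_empty] at h
  exact Set.not_nonempty_empty h

end Aux

open IA in
theorem stmt4 (In Out State : Type) (s : IA In Out State) :
    s.OE = {σ | ∃ ρ τ, ρ ∈ s.traces ∧ (∀ ℓ ∈ τ, ∃ a, ℓ = Sum.inl a) ∧ σ = ρ ++ τ} := by
  classical
  ext σ
  constructor
  · intro hσ
    set P : ℕ → Prop := fun k => (s.after (σ.take k)).Nonempty with hP
    have hP0 : P 0 := by simp [hP, IA.after]
    set n := Nat.findGreatest P σ.length with hn
    have hn_le : n ≤ σ.length := Nat.findGreatest_le _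
    have hspec : P n := Nat.findGreatest_spec (Nat.zero_le _) hP0
    have hgreat : ∀ k, n < k → k ≤ σ.length → ¬ P k := fun k h1 h2 =>
      Nat.findGreatest_is_greatest h1 h2
    clear_value n
    refine ⟨σ.take n, σ.drop n, ?_, ?_, (List.take_append_drop n σ).symm⟩
    · exact hspec
    · intro ℓ hℓ
      obtain ⟨j, hj, hget⟩ := List.mem_iff_getElem.mp hℓ
      cases hℓ' : ℓ with
      | inl a => exact ⟨a, rfl⟩
      | inr x =>
        exfalso
        have hd : (List.drop n σ).length = σ.length - n := by simp
        have hjlen : n + j < σ.length := by omega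
        rw [hℓ'] at hget
        have hgetσ : σ[n + j]'hjlen = Sum.inr x := by
          rw [← hget]
          simp [List.getElem_drop]
        have hdec : σ = σ.take (n + j) ++ Sum.inr x :: σ.drop (n + j + 1) := by
          conv_lhs => rw [← List.take_append_drop (n + j) σ]
          congr 1
          rw [← List.getElem_cons_drop hjlen, hgetσ]
        have hx := hσ _ _ _ hdec
        obtain ⟨q, hq, q', htr⟩ := hx
        have hne : P (n + j + 1) := by
          have htake : σ.take (n + j + 1) = σ.take (n + j) ++ [Sum.inr x] := by
            rw [List.take_succ]
            congr 1
            simp [List.getElem?_eq_getElem hjlen, hgetσ]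
          show (s.after (σ.take (n + j + 1))).Nonempty
          rw [htake, IA.after_append]
          exact ⟨q', q, hq, htr⟩
        exact hgreat _ (by omega) (by omega) hne
  · rintro ⟨ρ, τ, hρ, hτ, rfl⟩
    intro ρ' x τ' heq
    have hlen : ρ'.length < (ρ ++ τ).length := by
      rw [heq]; simp
    have h1 : (ρ ++ τ)[ρ'.length]'hlen = Sum.inr x := by
      have : (ρ' ++ Sum.inr x :: τ')[ρ'.length]'(by simp) = Sum.inr x := by
        rw [List.getElem_append_right (Nat.le_refl _)]
        simp
      rw [← this]
      congr 1
    have hlt : ρ'.length < ρ.length := by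
      by_contra hge
      push_neg at hge
      have h2 : (ρ ++ τ)[ρ'.length]'hlen = τ[ρ'.length - ρ.length]'(by
          simp at hlen; omega) := List.getElem_append_right hge
      have hmem : Sum.inr x ∈ τ := by
        rw [← h1, h2]; exact List.getElem_mem _
      obtain ⟨a, ha⟩ := hτ _ hmem
      exact absurd ha (by simp)
    have hpre : ρ' ++ [Sum.inr x] <+: ρ := by
      have hp1 : ρ' ++ [Sum.inr x] <+: ρ ++ τ := ⟨τ', by simp [heq]⟩
      exact List.prefix_of_prefix_length_le hp1 (List.prefix_append ρ τ)
        (by simp; omega)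
    obtain ⟨t, ht⟩ := hpre
    have hρne : (s.after ((ρ' ++ [Sum.inr x]) ++ t)).Nonempty := by rw [ht]; exact hρ
    have := IA.after_prefix_nonempty s hρne
    rw [IA.after_append] at this
    obtain ⟨q', q, hq, htr⟩ := this
    exact ⟨q, hq, q', htr⟩
end

section
/- uioco coincides with input-failure refinement after adding quiescence: for interface automata i, s with matching alphabets, i uioco s if and only if Δ(i) ≤_if Δ(s), where Δ adds a δ-selfloop to every state without outgoing outputs. -/
section Aux

open IA

variable {In O St St1 St2 : Type}

private lemma foldl_step_nonempty (s : IA In O St) :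
    ∀ (τ : List (In ⊕ O)) (P : Set St), (τ.foldl s.step P).Nonempty → P.Nonempty := by
  intro τ
  induction τ with
  | nil => intro P h; exact h
  | cons ℓ τ ih =>
    intro P h
    obtain ⟨q', q, hq, -⟩ := ih _ h
    exact ⟨q, hq⟩

private lemma after_snoc (s : IA In O St) (σ : List (In ⊕ O)) (ℓ : In ⊕ O) :
    s.after (σ ++ [ℓ]) = s.step (s.after σ) ℓ := by
  simp [IA.after]

private lemma traces_prefix (s : IA In O St) {σ τ : List (In ⊕ O)}
    (h : σ ++ τ ∈ s.traces) : σ ∈ s.traces := by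
  have : s.after (σ ++ τ) = τ.foldl s.step (s.after σ) := by
    simp [IA.after]
  rw [IA.traces, Set.mem_setOf_eq, this] at h
  exact foldl_step_nonempty s τ _ h

private lemma mem_out_iff (s : IA In O St) (σ : List (In ⊕ O)) (x : O) :
    x ∈ s.outSet (s.after σ) ↔ (s.after (σ ++ [Sum.inr x])).Nonempty := by
  rw [after_snoc]
  constructor
  · rintro ⟨q, hq, q', hq'⟩
    exact ⟨q', q, hq, hq'⟩
  · rintro ⟨q', q, hq, hq'⟩
    exact ⟨q, hq, q', hq'⟩

private lemma prefix_snoc_ne {α : Type*} {l₁ l₂ : List α} {b c : α}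
    (h : l₁ ++ [b] <+: l₂ ++ [c]) (hne : b ≠ c) : l₁ ++ [b] <+: l₂ := by
  obtain ⟨t, ht⟩ := h
  induction t using List.reverseRecOn with
  | nil =>
    rw [List.append_nil] at ht
    obtain ⟨-, hb⟩ := List.append_inj' ht rfl
    exact absurd (List.singleton_injective hb) hne
  | append_singleton t c' _ =>
    rw [← List.append_assoc] at ht
    obtain ⟨h1, -⟩ := List.append_inj' ht rfl
    exact ⟨t, h1⟩

private lemma mem_traces_of (A : IA In O St1) (B : IA In O St2)
    (h : ∀ σ ∈ B.Utraces, A.outSet (A.after σ) ⊆ B.outSet (B.after σ)) :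
    ∀ σ, σ ∈ A.traces →
      (∀ ρ a rest, σ = ρ ++ Sum.inl a :: rest → a ∈ B.inSet (B.after ρ)) →
      σ ∈ B.traces := by
  intro σ
  induction σ using List.reverseRecOn with
  | nil => exact fun _ _ => ⟨B.init, rfl⟩
  | append_singleton σ ℓ ih =>
    intro hA hu
    have hA' : σ ∈ A.traces := traces_prefix A hA
    have hu' : ∀ ρ a rest, σ = ρ ++ Sum.inl a :: rest → a ∈ B.inSet (B.after ρ) := by
      intro ρ a rest he
      exact hu ρ a (rest ++ [ℓ]) (by simp [he])
    have hB : σ ∈ B.traces := ih hA' hu'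
    match ℓ with
    | Sum.inl a =>
      have ha : a ∈ B.inSet (B.after σ) := hu σ a [] rfl
      obtain ⟨q, hq⟩ := hB
      obtain ⟨q', hq'⟩ := ha q hq
      rw [IA.traces, Set.mem_setOf_eq, after_snoc]
      exact ⟨q', q, hq, hq'⟩
    | Sum.inr x =>
      have hU : σ ∈ B.Utraces := by
        refine ⟨hB, ?_⟩
        rintro ρ a ⟨t, ht⟩
        exact hu' ρ a t (by simp [← ht])
      have hx : x ∈ A.outSet (A.after σ) := (mem_out_iff A σ x).2 hA
      exact (mem_out_iff B σ x).1 (h σ hU hx)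

private lemma mem_Utraces_of (A : IA In O St1) (B : IA In O St2)
    (h : ∀ σ ∈ B.Utraces, A.outSet (A.after σ) ⊆ B.outSet (B.after σ))
    {σ : List (In ⊕ O)} (hA : σ ∈ A.traces)
    (hu : ∀ ρ a rest, σ = ρ ++ Sum.inl a :: rest → a ∈ B.inSet (B.after ρ)) :
    σ ∈ B.Utraces := by
  refine ⟨mem_traces_of A B h σ hA hu, ?_⟩
  rintro ρ a ⟨t, ht⟩
  exact hu ρ a t (by simp [← ht])

private lemma notin_of_FtraceB {B : IA In O St2} {ρ : List (In ⊕ O)} {b : In}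
    (hF : ((ρ, some b) : FTrace In O) ∈ B.Ftraces) : b ∉ B.inSet (B.after ρ) := by
  rcases hF with ⟨hn, -⟩ | ⟨c, hc, hcn⟩
  · exact absurd hn (by simp)
  · obtain rfl : b = c := by simpa using hc
    exact hcn

private theorem uioco_iff_refIF_gen (A : IA In O St1) (B : IA In O St2) :
    (∀ σ ∈ B.Utraces,
        A.outSet (A.after σ) ⊆ B.outSet (B.after σ) ∧
        B.inSet (B.after σ) ⊆ A.inSet (A.after σ)) ↔
      A.Ftraces ⊆ fcl B.Ftraces := by
  constructor
  · intro h
    have hout : ∀ σ ∈ B.Utraces, A.outSet (A.after σ) ⊆ B.outSet (B.after σ) :=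
      fun σ hσ => (h σ hσ).1
    rintro ⟨σ, o⟩ ht
    by_cases hdec : ∃ ρ a rest, σ = ρ ++ Sum.inl a :: rest ∧ a ∉ B.inSet (B.after ρ)
    · obtain ⟨ρ, a, rest, hσeq, hna⟩ := hdec
      exact Or.inr ⟨ρ, a, (rest, o), Or.inr ⟨a, rfl, hna⟩, by simp [hσeq]⟩
    · push_neg at hdec
      rcases ht with ⟨ho, htr⟩ | ⟨a, ho, ha⟩
      · have hU := mem_Utraces_of A B hout htr (fun ρ a rest he => hdec ρ a rest he)
        exact Or.inl (Or.inl ⟨ho, hU.1⟩)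
      · have htr : σ ∈ A.traces := by
          rw [IA.inSet, Set.mem_setOf_eq] at ha
          push_neg at ha
          obtain ⟨q, hq, -⟩ := ha
          exact ⟨q, hq⟩
        have hU := mem_Utraces_of A B hout htr (fun ρ a rest he => hdec ρ a rest he)
        have haB : a ∉ B.inSet (B.after σ) := fun hc => ha ((h σ hU).2 hc)
        exact Or.inl (Or.inr ⟨a, ho, haB⟩)
  · intro h σ hσU
    obtain ⟨-, hpre⟩ := hσU
    constructor
    · intro x hx
      have hne : (σ ++ [Sum.inr x] : List (In ⊕ O)) ∈ A.traces :=
        (mem_out_iff A σ x).1 hx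
      have := h (show ((σ ++ [Sum.inr x], none) : FTrace In O) ∈ A.Ftraces from
        Or.inl ⟨rfl, hne⟩)
      rcases this with hm | ⟨ρ, a, ρ', hF, heq⟩
      · rcases hm with ⟨-, htr⟩ | ⟨a, ha, -⟩
        · exact (mem_out_iff B σ x).2 htr
        · exact absurd ha (by simp)
      · have heq1 : σ ++ [Sum.inr x] = (ρ ++ [Sum.inl a]) ++ ρ'.1 := by
          have := congrArg Prod.fst heq
          simpa using this
        have hpfx : ρ ++ [Sum.inl a] <+: σ :=
          prefix_snoc_ne ⟨ρ'.1, heq1.symm⟩ (by simp)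
        exact absurd (hpre ρ a hpfx) (notin_of_FtraceB hF)
    · intro a haB
      by_contra haA
      have := h (show ((σ, some a) : FTrace In O) ∈ A.Ftraces from
        Or.inr ⟨a, rfl, haA⟩)
      rcases this with hm | ⟨ρ, b, ρ', hF, heq⟩
      · exact absurd haB (notin_of_FtraceB hm)
      · have heq1 : σ = (ρ ++ [Sum.inl b]) ++ ρ'.1 := by
          have := congrArg Prod.fst heq
          simpa using this
        exact absurd (hpre ρ b ⟨ρ'.1, heq1.symm⟩) (notin_of_FtraceB hF)

end Aux

open IA in
theorem stmt12 (In Out State1 State2 : Type)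
    (i : IA In Out State1) (s : IA In Out State2) :
    i.uioco s ↔ (IA.delta i).refIF (IA.delta s) := by
  exact uioco_iff_refIF_gen (IA.delta i) (IA.delta s)
end

section
/- Input-universal determinization preserves input-failure semantics: for any interface automaton s, det_iu(s) is deterministic, and s ≡_if det_iu(s), i.e., fcl(Ftraces(s)) = fcl(Ftraces(det_iu(s))). -/
namespace IAProof19

open IA

variable {In Out State : Type}

lemma foldl_step_empty (s : IA In Out State) (σ : List (In ⊕ Out)) :
    σ.foldl s.step ∅ = ∅ := by
  induction σ with
  | nil => rfl
  | cons ℓ σ ih =>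
    have h : s.step ∅ ℓ = ∅ := by ext q'; simp [IA.step]
    simpa [h] using ih

/-- Key determinization lemma: every state reached in `detIU s` along `σ`
equals the subset-fold in `s`, and is nonempty. -/
lemma det_fold (s : IA In Out State) (σ : List (In ⊕ Out)) :
    ∀ (P : Set State), P.Nonempty →
      ∀ Q ∈ σ.foldl (IA.detIU s).step {P}, Q = σ.foldl s.step P ∧ Q.Nonempty := by
  induction σ with
  | nil =>
    intro P hP Q hQ
    simp only [List.foldl_nil, Set.mem_singleton_iff] at hQ
    exact ⟨by simpa using hQ, hQ ▸ hP⟩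
  | cons ℓ σ ih =>
    intro P hP Q hQ
    by_cases h : (match ℓ with
      | Sum.inl a => a ∈ s.inSet P
      | Sum.inr x => x ∈ s.outSet P)
    · have hne : (s.step P ℓ).Nonempty := by
        cases ℓ with
        | inl a =>
          obtain ⟨q, hq⟩ := hP
          obtain ⟨q', hq'⟩ := h q hq
          exact ⟨q', q, hq, hq'⟩
        | inr x =>
          obtain ⟨q, hq, q', hq'⟩ := h
          exact ⟨q', q, hq, hq'⟩
      have hstep : (IA.detIU s).step {P} ℓ = {s.step P ℓ} := by
        ext P'
        constructor
        · rintro ⟨R, hR, hne', hcond, hP'⟩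
          simp only [Set.mem_singleton_iff] at hR
          subst hR; simpa using hP'
        · rintro rfl
          exact ⟨P, rfl, hP, h, rfl⟩
      rw [List.foldl_cons, hstep] at hQ
      simpa using ih _ hne Q hQ
    · have hstep : (IA.detIU s).step {P} ℓ = ∅ := by
        ext P'
        simp only [Set.mem_empty_iff_false, iff_false]
        rintro ⟨R, hR, hne', hcond, hP'⟩
        simp only [Set.mem_singleton_iff] at hR
        subst hR; exact h hcond
      rw [List.foldl_cons, hstep, foldl_step_empty] at hQ
      exact absurd hQ (by simp)

lemma det_after_mem (s : IA In Out State) (σ : List (In ⊕ Out))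
    (Q : Set State) (hQ : Q ∈ (IA.detIU s).after σ) :
    Q = s.after σ ∧ Q.Nonempty :=
  det_fold s σ {s.init} ⟨s.init, rfl⟩ Q hQ

/-- If `σ` is a trace of `s`, then either it's a trace of `detIU s`, or it has
a prefix `ρ` that is a trace of `detIU s` followed by an input not universally
enabled after `ρ`. -/
lemma trace_dichotomy (s : IA In Out State) (σ : List (In ⊕ Out))
    (hσ : σ ∈ s.traces) :
    σ ∈ (IA.detIU s).traces ∨
    ∃ ρ a τ, σ = ρ ++ Sum.inl a :: τ ∧ ρ ∈ (IA.detIU s).traces ∧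
      a ∉ s.inSet (s.after ρ) := by
  induction σ using List.reverseRecOn with
  | nil => exact Or.inl ⟨{s.init}, rfl⟩
  | append_singleton ρ ℓ ih =>
    have hafter : s.after (ρ ++ [ℓ]) = s.step (s.after ρ) ℓ := by
      simp [IA.after, List.foldl_append]
    have hσ' : (s.step (s.after ρ) ℓ).Nonempty := by
      have := hσ
      rw [IA.traces, Set.mem_setOf_eq, hafter] at this
      exact this
    have hρ : ρ ∈ s.traces := by
      obtain ⟨q', q, hq, _⟩ := hσ'
      exact ⟨q, hq⟩
    rcases ih hρ with hdet | ⟨ρ₀, a, τ, rfl, hρ₀, hfail⟩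
    · -- ρ is a trace of detIU s
      obtain ⟨Q, hQ⟩ := hdet
      obtain ⟨rfl, hQne⟩ := det_after_mem s ρ Q hQ
      have hdafter : (IA.detIU s).after (ρ ++ [ℓ]) =
          (IA.detIU s).step ((IA.detIU s).after ρ) ℓ := by
        simp [IA.after, List.foldl_append]
      cases ℓ with
      | inl a =>
        by_cases ha : a ∈ s.inSet (s.after ρ)
        · refine Or.inl ⟨s.step (s.after ρ) (Sum.inl a), ?_⟩
          rw [hdafter]
          exact ⟨s.after ρ, hQ, hQne, ha, rfl⟩
        · exact Or.inr ⟨ρ, a, [], rfl, ⟨_, hQ⟩, ha⟩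
      | inr x =>
        have hx : x ∈ s.outSet (s.after ρ) := by
          obtain ⟨q', q, hq, htr⟩ := hσ'
          exact ⟨q, hq, q', htr⟩
        refine Or.inl ⟨s.step (s.after ρ) (Sum.inr x), ?_⟩
        rw [hdafter]
        exact ⟨s.after ρ, hQ, hQne, hx, rfl⟩
    · exact Or.inr ⟨ρ₀, a, τ ++ [ℓ], by simp, hρ₀, hfail⟩

/-- Input set of `detIU s` after a trace of it coincides with `s`'s. -/
lemma det_inSet (s : IA In Out State) (σ : List (In ⊕ Out))
    (hσ : σ ∈ (IA.detIU s).traces) (a : In) :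
    a ∈ (IA.detIU s).inSet ((IA.detIU s).after σ) ↔ a ∈ s.inSet (s.after σ) := by
  obtain ⟨Q, hQ⟩ := hσ
  obtain ⟨rfl, hQne⟩ := det_after_mem s σ Q hQ
  constructor
  · intro h
    obtain ⟨P', hne, hcond, _⟩ := h (s.after σ) hQ
    exact hcond
  · intro h R hR
    obtain ⟨rfl, _⟩ := det_after_mem s σ R hR
    exact ⟨s.step (s.after σ) (Sum.inl a), hQne, h, rfl⟩

lemma fcl_le {S T : Set (FTrace In Out)} (h : S ⊆ fcl T) : fcl S ⊆ fcl T := by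
  rintro t (ht | ⟨σ, a, ρ, hmem, rfl⟩)
  · exact h ht
  · rcases h hmem with hT | ⟨σ', a', ρ', hT', heq⟩
    · exact Or.inr ⟨σ, a, ρ, hT, rfl⟩
    · obtain ⟨h1, h2⟩ := Prod.mk.injEq .. ▸ heq
      refine Or.inr ⟨σ', a', (ρ'.1 ++ Sum.inl a :: ρ.1, ρ.2), hT', ?_⟩
      simp [h1]

lemma subset_fcl {S : Set (FTrace In Out)} : S ⊆ fcl S := Set.subset_union_left

lemma det_Ftraces_subset (s : IA In Out State) :
    (IA.detIU s).Ftraces ⊆ s.Ftraces := by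
  rintro ⟨σ, o⟩ (⟨ho, hσ⟩ | ⟨a, ho, ha⟩)
  · obtain ⟨Q, hQ⟩ := hσ
    obtain ⟨rfl, hQne⟩ := det_after_mem s σ Q hQ
    exact Or.inl ⟨ho, hQne⟩
  · -- a ∉ (detIU s).inSet ((detIU s).after σ), so the after set is nonempty
    have hσ : σ ∈ (IA.detIU s).traces := by
      by_contra hc
      have hempty : (IA.detIU s).after σ = ∅ :=
        Set.not_nonempty_iff_eq_empty.mp hc
      exact ha (fun Q hQ => absurd (hempty ▸ hQ) (Set.notMem_empty Q))
    exact Or.inr ⟨a, ho, fun h => ha ((det_inSet s σ hσ a).mpr h)⟩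

lemma Ftraces_subset_fcl_det (s : IA In Out State) :
    s.Ftraces ⊆ fcl (IA.detIU s).Ftraces := by
  rintro ⟨σ, o⟩ h
  have hσtr : σ ∈ s.traces := by
    rcases h with ⟨_, hσ⟩ | ⟨a, _, ha⟩
    · exact hσ
    · by_contra hc
      have hempty : s.after σ = ∅ := Set.not_nonempty_iff_eq_empty.mp hc
      exact ha (fun q hq => absurd (hempty ▸ hq) (Set.notMem_empty q))
  rcases trace_dichotomy s σ hσtr with hdet | ⟨ρ, a, τ, rfl, hρ, hfail⟩
  · -- σ is a trace of detIU s: the failure trace transfers directly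
    rcases h with ⟨ho, _⟩ | ⟨a, ho, ha⟩
    · exact subset_fcl (Or.inl ⟨ho, hdet⟩)
    · exact subset_fcl (Or.inr ⟨a, ho, fun hx => ha ((det_inSet s σ hdet a).mp hx)⟩)
  · -- failure at prefix ρ: closure takes care of the rest
    have hfl : ((ρ, some a) : FTrace In Out) ∈ (IA.detIU s).Ftraces :=
      Or.inr ⟨a, rfl, fun hx => hfail ((det_inSet s ρ hρ a).mp hx)⟩
    exact Or.inr ⟨ρ, a, (τ, o), hfl, rfl⟩

end IAProof19

open IA in
theorem stmt19 (In Out State : Type) (s : IA In Out State) :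
    (∀ σ ∈ (IA.detIU s).traces, ∃! P, P ∈ (IA.detIU s).after σ) ∧
    fcl s.Ftraces = fcl (IA.detIU s).Ftraces := by
  constructor
  · intro σ hσ
    obtain ⟨Q, hQ⟩ := hσ
    refine ⟨Q, hQ, fun P hP => ?_⟩
    rw [(IAProof19.det_after_mem s σ P hP).1, (IAProof19.det_after_mem s σ Q hQ).1]
  · apply Set.Subset.antisymm
    · exact IAProof19.fcl_le (IAProof19.Ftraces_subset_fcl_det s)
    · exact IAProof19.fcl_le
        ((IAProof19.det_Ftraces_subset s).trans IAProof19.subset_fcl)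
end
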